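/- For positive integers n, t and 1 ≤ r ≤ 3, the number of triples (α, β, γ) of partitions of total weight n with α 2-distinct of length t, β strict of length t, and γ an ordinary partition with ℓ(γ) = t (respectively ℓ(γ) < t) equals the number of Schmidt 3-partitions of n with exactly 3t parts (respectively exactly 3t−1 parts). -/

import Mathlib

/-- `l` is a partition: a weakly decreasing list of positive integers. -/
def IsPartition (l : List ℕ) : Prop :=
  l.Pairwise (· ≥ ·) ∧ ∀ x ∈ l, 0 < x

/-- `l` is a strict partition: a strictly decreasing list of positive integers. -/
def IsStrict (l : List ℕ) : Prop :=
  l.Pairwise (· > ·) ∧ ∀ x ∈ l, 0 < x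

/-- Sum of the parts of `l` in positions `1, k+1, 2k+1, …` (0-indexed `0, k, 2k, …`). -/
def schmidtSum (k : ℕ) (l : List ℕ) : ℕ :=
  ∑ i ∈ Finset.range l.length, if i % k = 0 then l.getD i 0 else 0

/-- `l` is a 2-distinct partition: adjacent parts differ by at least 2, all parts positive. -/
def Is2Distinct (l : List ℕ) : Prop :=
  l.Chain' (fun a b => b + 2 ≤ a) ∧ ∀ x ∈ l, 0 < x

/-!
Write aᵢ, bᵢ, cᵢ (0 ≤ i < t) for the parts of α, β, γ, padding γ with zeros to length t, and
merge them into the list whose i-th block of three parts is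
`(aᵢ + bᵢ + cᵢ, bᵢ + cᵢ + aᵢ₊₁ + 1, cᵢ + aᵢ₊₁ + bᵢ₊₁ + 1)`, where `aₜ = bₜ = 0` and the `+ 1`
is absent in the last block. Consecutive differences of this list are `aᵢ - aᵢ₊₁ - 1`,
`bᵢ - bᵢ₊₁` and `cᵢ - cᵢ₊₁ + 1`, so it is strictly decreasing exactly when α is 2-distinct,
β is strict and γ is weakly decreasing, and every such list of length 3t arises uniquely.
The parts in positions 1, 4, 7, … are the `aᵢ + bᵢ + cᵢ`, summing to |α| + |β| + |γ|, and the
last part is the last part of the padded γ. So ℓ(γ) = t yields a Schmidt 3-partition with 3t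
positive parts, and ℓ(γ) < t yields one whose last part is 0, which is dropped.
-/

open Finset in
theorem schmidtSum_append {k : ℕ} {l₁ : List ℕ} (hk : k ∣ l₁.length) (l₂ : List ℕ) :
    schmidtSum k (l₁ ++ l₂) = schmidtSum k l₁ + schmidtSum k l₂ := by
  unfold schmidtSum
  rw [List.length_append, sum_range_add]
  congr 1
  · refine sum_congr rfl fun i hi => ?_
    rw [List.getD_append _ _ _ _ (mem_range.1 hi)]
  · refine sum_congr rfl fun i _ => ?_
    obtain ⟨m, hm⟩ := hk
    rw [List.getD_append_right _ _ _ _ (by omega), Nat.add_sub_cancel_left, hm, Nat.mul_add_mod]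

theorem schmidtSum_cons_cons_cons (x y z : ℕ) (l : List ℕ) :
    schmidtSum 3 (x :: y :: z :: l) = x + schmidtSum 3 l := by
  rw [show x :: y :: z :: l = [x, y, z] ++ l from rfl, schmidtSum_append (by simp)]
  simp [schmidtSum, Finset.sum_range_succ]

open Finset in
theorem schmidtSum_append_zero (k : ℕ) (l : List ℕ) :
    schmidtSum k (l ++ [0]) = schmidtSum k l := by
  unfold schmidtSum
  rw [List.length_append, List.length_singleton, sum_range_succ,
    List.getD_append_right _ _ _ _ le_rfl, Nat.sub_self, List.getD_cons_zero, ite_self, add_zero]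
  refine sum_congr rfl fun i hi => ?_
  rw [List.getD_append _ _ _ _ (mem_range.1 hi)]

theorem isStrict_iff_isChain_append_zero {l : List ℕ} :
    IsStrict l ↔ (l ++ [0]).IsChain (· > ·) := by
  simp [IsStrict, List.isChain_iff_pairwise, List.pairwise_append]

theorem isStrict_iff {l : List ℕ} :
    IsStrict l ↔ l.IsChain (· > ·) ∧ ∀ x ∈ l.getLast?, 0 < x := by
  simp [isStrict_iff_isChain_append_zero, List.isChain_append]

theorem isPartition_iff {l : List ℕ} :
    IsPartition l ↔ l.IsChain (· ≥ ·) ∧ ∀ x ∈ l.getLast?, 0 < x := by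
  rw [IsPartition, List.isChain_iff_pairwise]
  refine and_congr_right fun h =>
    ⟨fun hpos x hx => hpos x (List.mem_of_getLast? hx), fun hlast => ?_⟩
  refine (List.isChain_iff_pairwise.2 h).backwards_induction _ _
    (fun _ _ hxy hy => hy.trans_le hxy) fun hne => ?_
  exact hlast _ (List.getLast?_eq_some_getLast hne)

theorem List.filter_pos_rightpad {l : List ℕ} (hl : ∀ x ∈ l, 0 < x) (n : ℕ) :
    (l.rightpad n 0).filter (0 < ·) = l := by
  simpa [List.rightpad] using hl

theorem List.rightpad_filter_pos_of_isChain {l : List ℕ} (hl : l.IsChain (· ≥ ·)) :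
    (l.filter (0 < ·)).rightpad l.length 0 = l := by
  induction l with
  | nil => rfl
  | cons c l ih =>
    rcases Nat.eq_zero_or_pos c with rfl | hc
    · have hzero : ∀ x ∈ 0 :: l, x = 0 := by
        simpa using (List.pairwise_cons.1 (List.isChain_iff_pairwise.1 hl)).1
      rw [List.filter_eq_nil_iff.2 (by simp +contextual [hzero])]
      exact (List.eq_replicate_iff.2 ⟨rfl, hzero⟩).symm
    · conv_rhs => rw [← ih (List.isChain_cons.1 hl).2]
      simp [hc, List.rightpad]

theorem bijOn_rightpad_zero (t : ℕ) :
    Set.BijOn (List.rightpad t 0) {γ | IsPartition γ ∧ γ.length < t}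
      {γ | (γ.IsChain (· ≥ ·) ∧ γ.getLast? = some 0) ∧ γ.length = t} := by
  refine ⟨?_, ?_, ?_⟩
  · rintro γ ⟨hγ, hγt⟩
    refine ⟨⟨?_, ?_⟩, by simp; omega⟩
    · rw [List.isChain_iff_pairwise]
      simp [List.rightpad, List.pairwise_append, List.pairwise_replicate, hγ.1]
    · simp [List.rightpad, List.getLast?_replicate]
      omega
  · rintro γ ⟨⟨-, hγ⟩, -⟩ γ' ⟨⟨-, hγ'⟩, -⟩ h
    rw [← List.filter_pos_rightpad hγ (n := t), h, List.filter_pos_rightpad hγ']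
  · rintro γ ⟨⟨hγ, hlast⟩, hγt⟩
    refine ⟨γ.filter (0 < ·), ⟨⟨?_, by simp⟩, ?_⟩, ?_⟩
    · exact (List.isChain_iff_pairwise.1 hγ).filter _
    · rw [← hγt]
      apply List.length_filter_lt_length_iff_exists.2
      exact ⟨0, List.mem_of_getLast? hlast, by simp⟩
    · rw [← hγt]; exact List.rightpad_filter_pos_of_isChain hγ

namespace Schmidt

def succHead : List ℕ → ℕ
  | [] => 0
  | a :: _ => a + 1

def merge : List ℕ → List ℕ → List ℕ → List ℕ
  | a :: as, b :: bs, c :: cs =>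
      (a + b + c) :: (b + c + succHead as) :: (c + succHead as + bs.headD 0) :: merge as bs cs
  | _, _, _ => []

theorem is2Distinct_iff {l : List ℕ} :
    Is2Distinct l ↔ l.IsChain (fun a b => b + 2 ≤ a) ∧ ∀ x ∈ l, 0 < x :=
  Iff.rfl

theorem is2Distinct_cons_iff {a : ℕ} {as : List ℕ} :
    Is2Distinct (a :: as) ↔ succHead as < a ∧ Is2Distinct as := by
  cases as with
  | nil => simp [is2Distinct_iff, succHead]
  | cons => simp [is2Distinct_iff, succHead]; grind

theorem isStrict_cons_iff {b : ℕ} {bs : List ℕ} :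
    IsStrict (b :: bs) ↔ bs.headD 0 < b ∧ IsStrict bs := by
  simp only [isStrict_iff_isChain_append_zero, List.cons_append, List.isChain_cons]
  cases bs <;> simp

theorem isChain_ge_cons_iff {c : ℕ} {cs : List ℕ} :
    (c :: cs).IsChain (· ≥ ·) ↔ cs.headD 0 ≤ c ∧ cs.IsChain (· ≥ ·) := by
  cases cs <;> simp

theorem mem_head?_merge {w : ℕ} {as bs cs : List ℕ} (hw : w ∈ (merge as bs cs).head?) :
    w + 1 = succHead as + bs.headD 0 + cs.headD 0 := by
  match as, bs, cs with
  | _ :: _, _ :: _, _ :: _ => simp [merge, succHead] at hw ⊢; omega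

theorem isChain_merge :
    ∀ {α β γ : List ℕ}, Is2Distinct α → IsStrict β → γ.IsChain (· ≥ ·) →
      (merge α β γ).IsChain (· > ·)
  | a :: as, b :: bs, c :: cs, hα, hβ, hγ => by
    rw [is2Distinct_cons_iff] at hα
    rw [isStrict_cons_iff] at hβ
    rw [isChain_ge_cons_iff] at hγ
    rw [merge]
    refine .cons_cons (by omega) (.cons_cons (by omega) (List.isChain_cons.2 ⟨?_, ?_⟩))
    · intro w hw
      have := mem_head?_merge hw
      omega
    · exact isChain_merge hα.2 hβ.2 hγ.2
  | [], _, _, _, _, _ | _ :: _, [], _, _, _, _ | _ :: _, _ :: _, [], _, _, _ => by simp [merge]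

theorem length_merge : ∀ {α β γ : List ℕ}, β.length = α.length → γ.length = α.length →
    (merge α β γ).length = 3 * α.length
  | a :: as, b :: bs, c :: cs, hβ, hγ => by
    simp only [List.length_cons, Nat.add_right_cancel_iff] at hβ hγ
    simp only [merge, List.length_cons, length_merge hβ hγ]
    ring
  | [], _, _, _, _ => by simp [merge]
  | _ :: _, [], _, hβ, _ | _ :: _, _ :: _, [], _, hγ => by simp_all

theorem schmidtSum_merge : ∀ {α β γ : List ℕ}, β.length = α.length → γ.length = α.length →
    schmidtSum 3 (merge α β γ) = α.sum + β.sum + γ.sum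
  | a :: as, b :: bs, c :: cs, hβ, hγ => by
    simp only [List.length_cons, Nat.add_right_cancel_iff] at hβ hγ
    rw [merge, schmidtSum_cons_cons_cons, schmidtSum_merge hβ hγ]
    simp only [List.sum_cons]
    ring
  | [], _, _, _, _ => by simp_all [merge, schmidtSum]
  | _ :: _, [], _, hβ, _ | _ :: _, _ :: _, [], _, hγ => by simp_all

theorem getLast?_merge : ∀ {α β γ : List ℕ}, β.length = α.length → γ.length = α.length →
    (merge α β γ).getLast? = γ.getLast?
  | a :: as, b :: bs, c :: cs, hβ, hγ => by
    simp only [List.length_cons, Nat.add_right_cancel_iff] at hβ hγ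
    rw [merge, List.getLast?_cons_cons, List.getLast?_cons_cons, List.getLast?_cons,
      getLast?_merge hβ hγ, List.getLast?_cons]
    rcases cs with _ | ⟨c', cs⟩
    · obtain rfl : as = [] := List.eq_nil_of_length_eq_zero hγ.symm
      obtain rfl : bs = [] := List.eq_nil_of_length_eq_zero hβ
      rfl
    · simp [List.getLast?_cons]
  | [], _, _, _, _ => by simp_all [merge]
  | _ :: _, [], _, hβ, _ | _ :: _, _ :: _, [], _, hγ => by simp_all

theorem eq_of_merge_eq {α β γ α' β' γ' : List ℕ} (hβ : β.length = α.length)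
    (hγ : γ.length = α.length) (hβ' : β'.length = α'.length) (hγ' : γ'.length = α'.length)
    (h : merge α β γ = merge α' β' γ') : α = α' ∧ β = β' ∧ γ = γ' := by
  have hα : α'.length = α.length := by
    have := congrArg List.length h
    rw [length_merge hβ hγ, length_merge hβ' hγ'] at this
    omega
  induction α generalizing β γ α' β' γ' with
  | nil => simp_all [List.length_eq_zero_iff]
  | cons a as ih =>
    obtain ⟨b, bs, rfl⟩ := List.exists_cons_of_length_eq_add_one hβ
    obtain ⟨c, cs, rfl⟩ := List.exists_cons_of_length_eq_add_one hγ
    obtain ⟨a', as', rfl⟩ := List.exists_cons_of_length_eq_add_one hα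
    obtain ⟨b', bs', rfl⟩ := List.exists_cons_of_length_eq_add_one (hβ'.trans hα)
    obtain ⟨c', cs', rfl⟩ := List.exists_cons_of_length_eq_add_one (hγ'.trans hα)
    simp only [List.length_cons, Nat.add_right_cancel_iff] at hβ hγ hβ' hγ' hα
    simp only [merge, List.cons.injEq] at h
    obtain ⟨rfl, rfl, rfl⟩ := ih hβ hγ hβ' hγ' h.2.2.2 hα
    simp only [List.cons.injEq, and_true]
    omega

theorem succHead_add_headD_le {α β γ : List ℕ} {z : ℕ} (hβ : β.length = α.length)
    (hγ : γ.length = α.length) (hz : ∀ w ∈ (merge α β γ).head?, w < z) :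
    succHead α + β.headD 0 + γ.headD 0 ≤ z := by
  rcases α with _ | ⟨a, α⟩
  · rw [List.eq_nil_of_length_eq_zero hβ, List.eq_nil_of_length_eq_zero hγ]
    simp [succHead]
  · obtain ⟨b, β, rfl⟩ := List.exists_cons_of_length_eq_add_one hβ
    obtain ⟨c, γ, rfl⟩ := List.exists_cons_of_length_eq_add_one hγ
    have := hz (a + b + c) (by simp [merge])
    simp only [succHead, List.headD_cons]
    omega

theorem exists_merge_eq (t : ℕ) : ∀ {l : List ℕ}, l.IsChain (· > ·) → l.length = 3 * t →
    ∃ α β γ : List ℕ, Is2Distinct α ∧ α.length = t ∧ IsStrict β ∧ β.length = t ∧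
      γ.IsChain (· ≥ ·) ∧ γ.length = t ∧ merge α β γ = l := by
  induction t with
  | zero =>
    intro l _ hl
    rw [List.eq_nil_of_length_eq_zero hl]
    exact ⟨[], [], [], by simp [is2Distinct_iff], rfl, by simp [IsStrict], rfl, by simp, rfl, rfl⟩
  | succ t ih =>
    rintro (_ | ⟨x, _ | ⟨y, _ | ⟨z, l⟩⟩⟩) hchain hl <;>
      simp only [List.length_cons, List.length_nil] at hl
    any_goals omega
    rw [List.isChain_cons_cons, List.isChain_cons_cons, List.isChain_cons] at hchain
    obtain ⟨hxy, hyz, hz, hchain⟩ := hchain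
    obtain ⟨α, β, γ, hα, hαt, hβ, hβt, hγ, hγt, rfl⟩ := ih hchain (by omega)
    have key := succHead_add_headD_le (hβt.trans hαt.symm) (hγt.trans hαt.symm) hz
    -- the truncated subtractions below are exact, by `hxy`, `hyz` and `key`
    refine ⟨(x - y + succHead α) :: α, (y - z + β.headD 0) :: β,
      (z - (succHead α + β.headD 0)) :: γ, ?_, by simp [hαt], ?_, by simp [hβt], ?_,
      by simp [hγt], ?_⟩
    · exact is2Distinct_cons_iff.2 ⟨by omega, hα⟩
    · exact isStrict_cons_iff.2 ⟨by omega, hβ⟩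
    · exact isChain_ge_cons_iff.2 ⟨by omega, hγ⟩
    · simp only [merge, List.cons.injEq, and_true]
      omega

theorem bijOn_merge (t n : ℕ) (P : Option ℕ → Prop) :
    Set.BijOn (fun p : List ℕ × List ℕ × List ℕ => merge p.1 p.2.1 p.2.2)
      {p | Is2Distinct p.1 ∧ p.1.length = t ∧ IsStrict p.2.1 ∧ p.2.1.length = t ∧
        (p.2.2.IsChain (· ≥ ·) ∧ P p.2.2.getLast?) ∧ p.2.2.length = t ∧
        p.1.sum + p.2.1.sum + p.2.2.sum = n}
      {l | (l.IsChain (· > ·) ∧ P l.getLast?) ∧ l.length = 3 * t ∧ schmidtSum 3 l = n} := by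
  refine ⟨?_, ?_, ?_⟩
  · rintro ⟨α, β, γ⟩ ⟨hα, hαt, hβ, hβt, ⟨hγ, hP⟩, hγt, hsum⟩
    have hβα := hβt.trans hαt.symm
    have hγα := hγt.trans hαt.symm
    refine ⟨⟨isChain_merge hα hβ hγ, ?_⟩, ?_, ?_⟩
    · rwa [getLast?_merge hβα hγα]
    · rw [length_merge hβα hγα, hαt]
    · rwa [schmidtSum_merge hβα hγα]
  · rintro ⟨α, β, γ⟩ ⟨-, hαt, -, hβt, -, hγt, -⟩ ⟨α', β', γ'⟩ ⟨-, hαt', -, hβt', -, hγt', -⟩ h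
    obtain ⟨rfl, rfl, rfl⟩ := eq_of_merge_eq (hβt.trans hαt.symm) (hγt.trans hαt.symm)
      (hβt'.trans hαt'.symm) (hγt'.trans hαt'.symm) h
    rfl
  · rintro l ⟨⟨hl, hP⟩, hlt, hsum⟩
    obtain ⟨α, β, γ, hα, hαt, hβ, hβt, hγ, hγt, rfl⟩ := exists_merge_eq t hl hlt
    have hβα := hβt.trans hαt.symm
    have hγα := hγt.trans hαt.symm
    refine ⟨(α, β, γ), ⟨hα, hαt, hβ, hβt, ⟨hγ, ?_⟩, hγt, ?_⟩, rfl⟩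
    · rwa [getLast?_merge hβα hγα] at hP
    · rwa [schmidtSum_merge hβα hγα] at hsum

end Schmidt

open Schmidt

theorem bijOn_dropLast (k m n : ℕ) (hm : 1 ≤ m) :
    Set.BijOn List.dropLast
      {l | (l.IsChain (· > ·) ∧ l.getLast? = some 0) ∧ l.length = m ∧ schmidtSum k l = n}
      {l | IsStrict l ∧ l.length = m - 1 ∧ schmidtSum k l = n} := by
  refine ⟨?_, ?_, ?_⟩
  · rintro l ⟨⟨hl, hlast⟩, hlm, hsum⟩
    have hdecomp := List.dropLast_append_getLast? 0 hlast
    refine ⟨?_, by rw [List.length_dropLast, hlm], ?_⟩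
    · rwa [isStrict_iff_isChain_append_zero, hdecomp]
    · rwa [← schmidtSum_append_zero, hdecomp]
  · rintro l ⟨⟨-, hlast⟩, -⟩ l' ⟨⟨-, hlast'⟩, -⟩ h
    rw [← List.dropLast_append_getLast? 0 hlast, ← List.dropLast_append_getLast? 0 hlast', h]
  · rintro l ⟨hl, hlm, hsum⟩
    refine ⟨l ++ [0], ⟨⟨isStrict_iff_isChain_append_zero.1 hl, by simp⟩, by simp; omega, ?_⟩,
      List.dropLast_concat⟩
    rwa [schmidtSum_append_zero]

theorem bijOn_rightpad_triple (n t : ℕ) :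
    Set.BijOn (fun p : List ℕ × List ℕ × List ℕ => (p.1, p.2.1, p.2.2.rightpad t 0))
      {p | Is2Distinct p.1 ∧ p.1.length = t ∧ IsStrict p.2.1 ∧ p.2.1.length = t ∧
        IsPartition p.2.2 ∧ p.2.2.length < t ∧ p.1.sum + p.2.1.sum + p.2.2.sum = n}
      {p | Is2Distinct p.1 ∧ p.1.length = t ∧ IsStrict p.2.1 ∧ p.2.1.length = t ∧
        (p.2.2.IsChain (· ≥ ·) ∧ p.2.2.getLast? = some 0) ∧ p.2.2.length = t ∧
        p.1.sum + p.2.1.sum + p.2.2.sum = n} := by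
  have hsum (γ : List ℕ) : (γ.rightpad t 0).sum = γ.sum := by simp [List.rightpad]
  obtain ⟨hmaps, hinj, hsurj⟩ := bijOn_rightpad_zero t
  refine ⟨?_, ?_, ?_⟩
  · rintro ⟨α, β, γ⟩ ⟨hα, hαt, hβ, hβt, hγ, hγt, hn⟩
    obtain ⟨hγ', hγt'⟩ := hmaps ⟨hγ, hγt⟩
    exact ⟨hα, hαt, hβ, hβt, hγ', hγt', by rwa [hsum]⟩
  · rintro ⟨α, β, γ⟩ ⟨-, -, -, -, hγ, hγt, -⟩ ⟨α', β', γ'⟩ ⟨-, -, -, -, hγ', hγt', -⟩ h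
    simp only [Prod.mk.injEq] at h
    obtain ⟨rfl, rfl, h⟩ := h
    rw [show γ = γ' from hinj ⟨hγ, hγt⟩ ⟨hγ', hγt'⟩ h]
  · rintro ⟨α, β, γ⟩ ⟨hα, hαt, hβ, hβt, hγ, hγt, hn⟩
    obtain ⟨γ₀, hγ₀, rfl⟩ := hsurj ⟨hγ, hγt⟩
    refine ⟨(α, β, γ₀), ⟨hα, hαt, hβ, hβt, hγ₀.1, hγ₀.2, ?_⟩, rfl⟩
    show α.sum + β.sum + γ₀.sum = n
    rwa [← hsum γ₀]

theorem bijOn_merge_length_eq (n t : ℕ) :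
    Set.BijOn (fun p : List ℕ × List ℕ × List ℕ => merge p.1 p.2.1 p.2.2)
      {p | Is2Distinct p.1 ∧ p.1.length = t ∧ IsStrict p.2.1 ∧ p.2.1.length = t ∧
        IsPartition p.2.2 ∧ p.2.2.length = t ∧ p.1.sum + p.2.1.sum + p.2.2.sum = n}
      {l | IsStrict l ∧ l.length = 3 * t ∧ schmidtSum 3 l = n} := by
  simpa only [isPartition_iff, isStrict_iff] using
    bijOn_merge t n (fun o => ∀ x ∈ o, 0 < x)

theorem bijOn_merge_length_lt (n t : ℕ) (ht : 1 ≤ t) :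
    Set.BijOn
      (fun p : List ℕ × List ℕ × List ℕ => (merge p.1 p.2.1 (p.2.2.rightpad t 0)).dropLast)
      {p | Is2Distinct p.1 ∧ p.1.length = t ∧ IsStrict p.2.1 ∧ p.2.1.length = t ∧
        IsPartition p.2.2 ∧ p.2.2.length < t ∧ p.1.sum + p.2.1.sum + p.2.2.sum = n}
      {l | IsStrict l ∧ l.length = 3 * t - 1 ∧ schmidtSum 3 l = n} :=
  (bijOn_dropLast 3 (3 * t) n (by omega)).comp
    ((bijOn_merge t n (· = some 0)).comp (bijOn_rightpad_triple n t))

theorem schmidt_three_refined_general (n t : ℕ) (ht : 1 ≤ t) :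
    (Nat.card {p : List ℕ × List ℕ × List ℕ //
        Is2Distinct p.1 ∧ p.1.length = t ∧
        IsStrict p.2.1 ∧ p.2.1.length = t ∧
        IsPartition p.2.2 ∧ p.2.2.length = t ∧
        p.1.sum + p.2.1.sum + p.2.2.sum = n} =
      Nat.card {l : List ℕ // IsStrict l ∧ l.length = 3 * t ∧ schmidtSum 3 l = n}) ∧
    (Nat.card {p : List ℕ × List ℕ × List ℕ //
        Is2Distinct p.1 ∧ p.1.length = t ∧
        IsStrict p.2.1 ∧ p.2.1.length = t ∧
        IsPartition p.2.2 ∧ p.2.2.length < t ∧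
        p.1.sum + p.2.1.sum + p.2.2.sum = n} =
      Nat.card {l : List ℕ // IsStrict l ∧ l.length = 3 * t - 1 ∧ schmidtSum 3 l = n}) :=
  ⟨Nat.card_congr ((bijOn_merge_length_eq n t).equiv _),
    Nat.card_congr ((bijOn_merge_length_lt n t ht).equiv _)⟩

/-- Refined Schmidt 3-partition theorem: triples `(α, β, γ)` of total weight `n` with
`α` 2-distinct of length `t`, `β` strict of length `t`, and `γ` an ordinary partition
with `ℓ(γ) = t` (resp. `ℓ(γ) < t`) are equinumerous with Schmidt 3-partitions of `n`
with exactly `3t` (resp. `3t - 1`) parts. -/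
theorem schmidt_three_refined (n t : ℕ) (hn : 1 ≤ n) (ht : 1 ≤ t) :
    (Nat.card {p : List ℕ × List ℕ × List ℕ //
        Is2Distinct p.1 ∧ p.1.length = t ∧
        IsStrict p.2.1 ∧ p.2.1.length = t ∧
        IsPartition p.2.2 ∧ p.2.2.length = t ∧
        p.1.sum + p.2.1.sum + p.2.2.sum = n} =
      Nat.card {l : List ℕ // IsStrict l ∧ l.length = 3 * t ∧ schmidtSum 3 l = n}) ∧
    (Nat.card {p : List ℕ × List ℕ × List ℕ //
        Is2Distinct p.1 ∧ p.1.length = t ∧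
        IsStrict p.2.1 ∧ p.2.1.length = t ∧
        IsPartition p.2.2 ∧ p.2.2.length < t ∧
        p.1.sum + p.2.1.sum + p.2.2.sum = n} =
      Nat.card {l : List ℕ // IsStrict l ∧ l.length = 3 * t - 1 ∧ schmidtSum 3 l = n}) :=
  schmidt_three_refined_general n t ht
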